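/- arXiv:2304.07561 — 3 statements merged into one kernel-verified Lean document; each statement's English description precedes it below -/
import Mathlib

section
/- Let G ∈ F_q^{2N×N} be strongly self-orthogonal, H ∈ F_q^{2N×N} with [G | H] invertible, and M = [0 | I_N]·[G | H]⁻¹. Then the row space of M equals the row space of Gᵀ J; equivalently, there exists an invertible P ∈ F_q^{N×N} with M = P Gᵀ J. -/
open Matrix

/-- The standard symplectic structure matrix `J = [[0, -I], [I, 0]]`. -/
def Jmat (F : Type*) [Field F] (N : ℕ) : Matrix (Fin N ⊕ Fin N) (Fin N ⊕ Fin N) F :=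
  Matrix.fromBlocks 0 (-1) 1 0

/-!
Put `A = [G | H]` and `B = Gᵀ J`. Self-orthogonality says `B G = 0`, so
`B A = [0 | B H] = (B H) [0 | I] = (B H) M A`, and cancelling `A` gives `B = (B H) M`.
Since `J` is invertible, `B` has rank `N`, which forces the `N × N` factor `B H` to be
invertible; hence `M = (B H)⁻¹ B`, and `M` and `B` have the same row space.
-/

namespace Matrix

variable {K : Type*} [Field K] {m n : Type*} [Fintype n] [DecidableEq n]

theorem isUnit_of_rank_eq_card {A : Matrix n n K} (h : A.rank = Fintype.card n) : IsUnit A := by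
  rw [← mulVec_surjective_iff_isUnit, ← coe_mulVecLin, ← LinearMap.range_eq_top]
  exact Submodule.eq_top_of_finrank_eq (by simpa [rank] using h)

theorem isUnit_of_eq_mul_of_rank_eq_card [Fintype m] {B M : Matrix n m K} {C : Matrix n n K}
    (hB : B.rank = Fintype.card n) (h : B = C * M) : IsUnit C :=
  isUnit_of_rank_eq_card <| le_antisymm (rank_le_card_width C) <|
    hB ▸ h ▸ rank_mul_le_left C M

theorem span_rows_mul_of_isUnit {P : Matrix n n K} (hP : IsUnit P) (B : Matrix n m K) :
    Submodule.span K (Set.range fun i => (P * B) i) =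
      Submodule.span K (Set.range fun i => B i) := by
  have hcomp : (P * B).vecMulLinear = B.vecMulLinear ∘ₗ P.vecMulLinear :=
    LinearMap.ext fun x => (vecMul_vecMul x P B).symm
  simp only [← row_apply', ← range_vecMulLinear, hcomp]
  exact LinearMap.range_comp_of_range_eq_top _
    (LinearMap.range_eq_top.2 (vecMul_surjective_iff_isUnit.2 hP))

theorem eq_mul_mul_of_mul_fromCols_eq [Fintype m] [DecidableEq m] {B M : Matrix n (m ⊕ n) K}
    {G : Matrix (m ⊕ n) m K} {H : Matrix (m ⊕ n) n K} (hBG : B * G = 0)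
    (hGH : IsUnit (fromCols G H)) (hM : M * fromCols G H = fromCols 0 1) :
    B = B * H * M := by
  refine mul_left_injective_of_inv _ _ (mul_nonsing_inv _ ((isUnit_iff_isUnit_det _).1 hGH)) ?_
  change B * fromCols G H = B * H * M * fromCols G H
  rw [Matrix.mul_assoc, hM, mul_fromCols, mul_fromCols, hBG, Matrix.mul_zero, Matrix.mul_one]

end Matrix

theorem Jmat_mul_Jmat (F : Type*) [Field F] (N : ℕ) : Jmat F N * Jmat F N = -1 := by
  simp [Jmat, fromBlocks_multiply, ← fromBlocks_one, fromBlocks_neg]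

theorem rank_mul_Jmat {F : Type*} [Field F] {N : ℕ} {m : Type*}
    (B : Matrix m (Fin N ⊕ Fin N) F) : (B * Jmat F N).rank = B.rank :=
  rank_mul_eq_left_of_isUnit_det _ _ <| isUnit_det_of_right_inverse (B := -Jmat F N) <| by
    rw [Matrix.mul_neg, Jmat_mul_Jmat, neg_neg]

/-- With `G` SSO, `[G | H]` invertible, and `M = [0 | I]·[G | H]⁻¹`, the row space
of `M` equals the row space of `Gᵀ J`; equivalently `M = P Gᵀ J` for some
invertible `P`. -/
theorem transfer_matrix_rowspace {F : Type*} [Field F] {N : ℕ}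
    (G H : Matrix (Fin N ⊕ Fin N) (Fin N) F)
    (hG : Gᵀ * Jmat F N * G = 0) (hGrank : G.rank = N)
    (hGH : IsUnit (Matrix.fromCols G H))
    (M : Matrix (Fin N) (Fin N ⊕ Fin N) F)
    (hM : M = Matrix.fromCols (0 : Matrix (Fin N) (Fin N) F) 1 *
      (Matrix.fromCols G H)⁻¹) :
    Submodule.span F (Set.range fun i => M i) =
      Submodule.span F (Set.range fun i => (Gᵀ * Jmat F N) i) ∧
    ∃ P : Matrix (Fin N) (Fin N) F, IsUnit P ∧ M = P * (Gᵀ * Jmat F N) := by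
  set B := Gᵀ * Jmat F N
  have hMA : M * fromCols G H = fromCols 0 1 := by
    rw [hM]
    exact (Matrix.mul_assoc _ _ _).trans <| by
      rw [nonsing_inv_mul _ ((isUnit_iff_isUnit_det _).1 hGH), Matrix.mul_one]
  have hfactor : B = B * H * M := eq_mul_mul_of_mul_fromCols_eq hG hGH hMA
  have hBrank : B.rank = Fintype.card (Fin N) := by
    rw [rank_mul_Jmat, rank_transpose, hGrank, Fintype.card_fin]
  have hK : IsUnit (B * H) := isUnit_of_eq_mul_of_rank_eq_card hBrank hfactor
  have hMB : M = (B * H)⁻¹ * B :=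
    calc M = (B * H)⁻¹ * (B * H) * M := by
          rw [nonsing_inv_mul _ ((isUnit_iff_isUnit_det _).1 hK), Matrix.one_mul]
      _ = (B * H)⁻¹ * B := by rw [Matrix.mul_assoc, ← hfactor]
  refine ⟨?_, _, isUnit_nonsing_inv_iff.2 hK, hMB⟩
  rw [hMB, span_rows_mul_of_isUnit (isUnit_nonsing_inv_iff.2 hK)]
end

section
/- Every matrix M ∈ F_q^{N×2N} with Mᵀ strongly self-orthogonal can be written as M = P · [I_N | S] · Λ, where P is an invertible N×N matrix, S is a symmetric N×N matrix, and Λ = [[I-Σ, Σ], [-Σ, I-Σ]]⁻¹ for some diagonal 0-1 matrix Σ. (Standard form of SSO matrices up to local invertible transformations.) -/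
/-!
Write `M = [A | B]`; isotropy says `A Bᵀ` is symmetric. Pick a maximal linearly independent set
`t` of columns of `A` and let `Σ` be the 0-1 diagonal matrix supported off `t`. Right
multiplication by the signed swap `Λ = [[I-Σ, Σ], [-Σ, I-Σ]]` replaces the columns of `A` outside
`t` by (minus) the corresponding columns of `B`, giving `M Λ = [C | D]`. A row vector `x` killing
`C` kills the columns of `A` in `t`, hence all of `A`; isotropy then makes `x B` a relation among
the columns of `A` supported on `t`, so `x B = 0` too, and full rank forces `x = 0`. Thus `C` is
invertible. Since `Λ` is orthogonal and symplectic, `[C | D]` is again isotropic, i.e.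
`S = C⁻¹ D` is symmetric, and `M = C [I | S] Λ⁻¹`.
-/

open Matrix

namespace Matrix

variable {R : Type*} [CommRing R] {m n : Type*}

theorem linearIndependent_row_of_rank_eq_card {K : Type*} [Field K] [Fintype m] [Fintype n]
    {A : Matrix m n K} (hA : A.rank = Fintype.card m) : LinearIndependent K A.row :=
  linearIndependent_iff_card_eq_finrank_span.mpr <| by
    rw [Set.finrank, ← rank_eq_finrank_span_row, hA]

theorem isUnit_of_forall_vecMul_eq_zero {K : Type*} [Field K] [Fintype m] [DecidableEq m]
    {A : Matrix m m K} (hA : ∀ x, x ᵥ* A = 0 → x = 0) : IsUnit A := by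
  rw [isUnit_iff_isUnit_det, isUnit_iff_ne_zero, Ne, ← exists_vecMul_eq_zero_iff]
  exact fun ⟨x, hx0, hx⟩ => hx0 (hA x hx)

theorem vecMul_eq_zero_of_forall_mem_eq_zero [Fintype m] {A : Matrix m n R} {t : Set n}
    (ht : Set.range A.col ⊆ Submodule.span R (A.col '' t)) {x : m → R}
    (hx : ∀ i ∈ t, (x ᵥ* A) i = 0) : x ᵥ* A = 0 := by
  have hspan : Submodule.span R (A.col '' t) ≤ LinearMap.ker (dotProductBilin R R x) :=
    Submodule.span_le.mpr <| Set.image_subset_iff.mpr hx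
  funext i
  exact hspan (ht ⟨i, rfl⟩)

theorem eq_zero_of_mulVec_eq_zero_of_linearIndepOn [Fintype n] {A : Matrix m n R} {t : Set n}
    (ht : LinearIndepOn R A.col t) {v : n → R} (hv : ∀ i ∉ t, v i = 0) (hAv : A *ᵥ v = 0) :
    v = 0 := by
  classical
  have hsum : ∑ i ∈ t.toFinset, v i • A.col i = 0 := by
    rw [Finset.sum_subset (Finset.subset_univ _) fun i _ hi => by
      rw [hv i (by simpa using hi), zero_smul], ← hAv]
    ext k
    simp only [Finset.sum_apply, Pi.smul_apply, col_apply, smul_eq_mul, mul_comm, mulVec,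
      dotProduct]
  funext i
  by_cases hi : i ∈ t
  · exact linearIndepOn_finset_iff.mp (by simpa using ht) v hsum i (by simpa using hi)
  · exact hv i hi

theorem exists_symm_eq_mul_fromCols_one [Fintype n] [DecidableEq n] {C D : Matrix n n R}
    (hC : IsUnit C) (hCD : D * Cᵀ = C * Dᵀ) :
    ∃ S, Sᵀ = S ∧ fromCols C D = C * fromCols (1 : Matrix n n R) S := by
  have hdet : IsUnit C.det := (isUnit_iff_isUnit_det C).mp hC
  have hdetT : IsUnit Cᵀ.det := by rwa [det_transpose]
  refine ⟨C⁻¹ * D, ?_, by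
    rw [mul_fromCols, Matrix.mul_one, mul_nonsing_inv_cancel_left _ _ hdet]⟩
  calc (C⁻¹ * D)ᵀ = C⁻¹ * (C * Dᵀ) * Cᵀ⁻¹ := by
        rw [transpose_mul, transpose_nonsing_inv, nonsing_inv_mul_cancel_left _ _ hdet]
    _ = C⁻¹ * (D * Cᵀ * Cᵀ⁻¹) := by rw [← hCD, Matrix.mul_assoc, Matrix.mul_assoc]
    _ = C⁻¹ * D := by rw [mul_nonsing_inv_cancel_right _ _ hdetT]

theorem exists_isUnit_mul_one_sub_diagonal_sub_mul_diagonal {K : Type*} [Field K] [Fintype n]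
    [DecidableEq n] {A B : Matrix n n K} (hAB : B * Aᵀ = A * Bᵀ)
    (hrows : LinearIndependent K (fromCols A B).row) :
    ∃ d : n → K, (∀ i, d i = 0 ∨ d i = 1) ∧
      IsUnit (A * (1 - diagonal d) - B * diagonal d) := by
  classical
  obtain ⟨t, -, -, hspan, hind⟩ :=
    exists_linearIndepOn_extension (linearIndepOn_empty K A.col) (Set.empty_subset Set.univ)
  rw [Set.image_univ] at hspan
  refine ⟨fun i => if i ∈ t then 0 else 1, fun i => by by_cases hi : i ∈ t <;> simp [hi], ?_⟩
  refine isUnit_of_forall_vecMul_eq_zero fun x hx => ?_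
  have hcoord : ∀ i, (if i ∈ t then (x ᵥ* A) i else (x ᵥ* B) i) = 0 := by
    intro i
    have hxi := congrFun hx i
    rw [vecMul_sub, ← vecMul_vecMul, ← vecMul_vecMul, ← diagonal_one, diagonal_sub] at hxi
    split_ifs with hi <;> simpa [vecMul_diagonal, hi, -vecMul_vecMul] using hxi
  have hA : x ᵥ* A = 0 :=
    vecMul_eq_zero_of_forall_mem_eq_zero hspan fun i hi => by simpa [hi] using hcoord i
  have hB : x ᵥ* B = 0 := by
    refine eq_zero_of_mulVec_eq_zero_of_linearIndepOn hind
      (fun i hi => by simpa [hi] using hcoord i) ?_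
    rw [← vecMul_transpose, vecMul_vecMul, hAB, ← vecMul_vecMul, hA, zero_vecMul]
  refine (injective_iff_map_eq_zero (vecMulLinear (fromCols A B))).mp
    (vecMul_injective_iff.mpr hrows) x ?_
  rw [vecMulLinear_apply, vecMul_fromCols, hA, hB, Sum.elim_zero_zero]

end Matrix

section SignedSwap

variable {R : Type*} [CommRing R] {n : Type*} [Fintype n] [DecidableEq n]

def signedSwap (P : Matrix n n R) : Matrix (n ⊕ n) (n ⊕ n) R :=
  fromBlocks (1 - P) P (-P) (1 - P)

theorem fromCols_mul_signedSwap {m : Type*} (A B : Matrix m n R) (P : Matrix n n R) :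
    fromCols A B * signedSwap P = fromCols (A * (1 - P) - B * P) (A * P + B * (1 - P)) := by
  rw [signedSwap, fromCols_mul_fromBlocks, Matrix.mul_neg, ← sub_eq_add_neg]

variable {P : Matrix n n R}

theorem signedSwap_mul_transpose (hP : IsIdempotentElem P) (hPt : Pᵀ = P) :
    signedSwap P * (signedSwap P)ᵀ = 1 := by
  rw [signedSwap, fromBlocks_transpose, fromBlocks_multiply]
  simp only [transpose_sub, transpose_one, transpose_neg, hPt, Matrix.mul_neg, Matrix.neg_mul,
    neg_neg, neg_zero, add_zero, hP.eq, hP.one_sub.eq, hP.mul_one_sub_self,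
    hP.one_sub_mul_self, sub_add_cancel, add_sub_cancel, fromBlocks_one]

theorem signedSwap_mul_mul_transpose (hP : IsIdempotentElem P) (hPt : Pᵀ = P) :
    signedSwap P * fromBlocks 0 (-1) 1 0 * (signedSwap P)ᵀ = fromBlocks 0 (-1) 1 0 := by
  rw [signedSwap, fromBlocks_transpose, fromBlocks_multiply, fromBlocks_multiply]
  simp only [transpose_sub, transpose_one, transpose_neg, hPt, Matrix.mul_neg, Matrix.neg_mul,
    neg_neg, Matrix.mul_zero, Matrix.mul_one, add_zero, zero_add, neg_zero, hP.eq,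
    hP.one_sub.eq, hP.mul_one_sub_self, hP.one_sub_mul_self, ← neg_add, add_sub_cancel,
    sub_add_cancel]

end SignedSwap

theorem fromCols_mul_Jmat_mul_transpose_eq_zero_iff {F : Type*} [Field F] {m : Type*} {N : ℕ}
    (A B : Matrix m (Fin N) F) :
    fromCols A B * Jmat F N * (fromCols A B)ᵀ = 0 ↔ B * Aᵀ = A * Bᵀ := by
  rw [Jmat, fromCols_mul_fromBlocks, transpose_fromCols, fromCols_mul_fromRows]
  simp only [Matrix.mul_zero, Matrix.mul_one, zero_add, Matrix.mul_neg, add_zero, Matrix.neg_mul]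
  rw [← sub_eq_add_neg, sub_eq_zero]

/-- Standard form: every `M` with SSO transpose can be written as
`M = P·[I | S]·Λ` with `P` invertible, `S` symmetric, and `Λ` the inverse of a
signed column-swap matrix `[[I-Σ, Σ],[-Σ, I-Σ]]` for a diagonal 0-1 matrix `Σ`. -/
theorem sso_standard_form {F : Type*} [Field F] {N : ℕ}
    (M : Matrix (Fin N) (Fin N ⊕ Fin N) F)
    (hM : M * Jmat F N * Mᵀ = 0) (hrank : M.rank = N) :
    ∃ (P S Sg : Matrix (Fin N) (Fin N) F),
      IsUnit P ∧ Sᵀ = S ∧ Sg.IsDiag ∧ (∀ i, Sg i i = 0 ∨ Sg i i = 1) ∧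
      M = P * Matrix.fromCols (1 : Matrix (Fin N) (Fin N) F) S *
        (Matrix.fromBlocks (1 - Sg) Sg (-Sg) (1 - Sg))⁻¹ := by
  have hAB := (fromCols_mul_Jmat_mul_transpose_eq_zero_iff M.toCols₁ M.toCols₂).mp
    (by rwa [fromCols_toCols])
  obtain ⟨d, hd, hC⟩ := exists_isUnit_mul_one_sub_diagonal_sub_mul_diagonal hAB
    (by rw [fromCols_toCols]; exact linearIndependent_row_of_rank_eq_card (by simpa using hrank))
  set Λ := signedSwap (diagonal d)
  have hSg : IsIdempotentElem (diagonal d) := by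
    rw [IsIdempotentElem, diagonal_mul_diagonal]
    congr 1; funext i; rcases hd i with h | h <;> simp [h]
  have hΛ : Λ * Λᵀ = 1 := signedSwap_mul_transpose hSg (diagonal_transpose d)
  have hΛJ : Λ * Jmat F N * Λᵀ = Jmat F N :=
    signedSwap_mul_mul_transpose hSg (diagonal_transpose d)
  have hMΛ : M * Λ * Jmat F N * (M * Λ)ᵀ = 0 := by
    calc M * Λ * Jmat F N * (M * Λ)ᵀ = M * (Λ * Jmat F N * Λᵀ) * Mᵀ := by
          simp only [transpose_mul, Matrix.mul_assoc]
      _ = 0 := by rw [hΛJ, hM]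
  rw [← fromCols_toCols M, fromCols_mul_signedSwap,
    fromCols_mul_Jmat_mul_transpose_eq_zero_iff] at hMΛ
  obtain ⟨S, hS, hMS⟩ := exists_symm_eq_mul_fromCols_one hC hMΛ
  refine ⟨_, S, diagonal d, hC, hS, isDiag_diagonal d, fun i => by simpa using hd i, ?_⟩
  change M = _ * _ * Λ⁻¹
  rw [inv_eq_right_inv hΛ, ← hMS, ← fromCols_mul_signedSwap, fromCols_toCols, Matrix.mul_assoc,
    hΛ, Matrix.mul_one]
end

section
/- Let N ≥ 1, let α₁,…,α_N be distinct elements of F_q, let u₁,…,u_N be nonzero, and define v_j = u_j⁻¹ ∏_{i≠j}(α_j - α_i)⁻¹. Let G ∈ F_q^{2N×N} be the block-diagonal matrix diag(G_u, G_v) where G_u is the N×⌈N/2⌉ GRS generator matrix with entries u_i α_i^{m-1} and G_v is the N×⌊N/2⌋ GRS generator matrix with entries v_i α_i^{m-1}. Then Gᵀ J G = 0 and rank(G) = N, i.e., G is strongly self-orthogonal. -/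
open Matrix

/-!
Evaluating `X ^ k` by Lagrange interpolation at the distinct points `α i` and reading off the
coefficient of `X ^ (N - 1)` gives `∑ i, α i ^ k / ∏_{j ≠ i} (α i - α j) = 0` for `k ≤ N - 2`.
With `v i = (u i * ∏_{j ≠ i} (α i - α j))⁻¹` this says `G_uᵀ G_v = 0` whenever the two dimensions
add up to at most `N`, which makes `Gᵀ J G = fromBlocks 0 (-G_uᵀ G_v) (G_vᵀ G_u) 0` vanish.
For the rank, a GRS generator matrix with `k ≤ N` columns has trivial kernel, because
on any `k` of the points it is a Vandermonde matrix with nonzero row scalings; so the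
block-diagonal `G` has trivial kernel and rank `⌈N/2⌉ + ⌊N/2⌋ = N`.
-/

open Finset Polynomial

theorem Lagrange.sum_pow_div_prod_sub_eq_zero {F ι : Type*} [Field F] [DecidableEq ι]
    (s : Finset ι) {v : ι → F} (hvs : Set.InjOn v s) {k : ℕ} (hk : k + 2 ≤ #s) :
    ∑ i ∈ s, v i ^ k / ∏ j ∈ s.erase i, (v i - v j) = 0 := by
  have hdeg : (X ^ k : F[X]).degree < #s := by
    rw [degree_X_pow]
    exact_mod_cast (by omega : k < #s)
  have h := Lagrange.coeff_eq_sum hvs hdeg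
  rw [coeff_X_pow, if_neg (by omega)] at h
  simpa using h.symm

namespace Matrix

variable {R : Type*}

theorem fromBlocks_mulVec_eq_zero {m n k l : Type*} [Fintype k] [Fintype l] [Semiring R]
    {A : Matrix m k R} {B : Matrix n l R}
    (hA : ∀ x, A *ᵥ x = 0 → x = 0) (hB : ∀ x, B *ᵥ x = 0 → x = 0) (x : k ⊕ l → R)
    (hx : fromBlocks A 0 0 B *ᵥ x = 0) : x = 0 := by
  rw [fromBlocks_mulVec] at hx
  simp only [zero_mulVec, zero_add, add_zero] at hx
  have hl : x ∘ Sum.inl = 0 := hA _ (funext fun i => congrFun hx (Sum.inl i))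
  have hr : x ∘ Sum.inr = 0 := hB _ (funext fun i => congrFun hx (Sum.inr i))
  funext j
  cases j with
  | inl j => exact congrFun hl j
  | inr j => exact congrFun hr j

theorem rank_eq_card_of_mulVec_eq_zero {m n : Type*} [Fintype n] [Field R] {A : Matrix m n R}
    (hA : ∀ x, A *ᵥ x = 0 → x = 0) : A.rank = Fintype.card n := by
  have hinj : Function.Injective A.mulVecLin := by
    rw [← LinearMap.ker_eq_bot, ker_mulVecLin_eq_bot_iff]
    exact hA
  rw [rank, LinearMap.finrank_range_of_inj hinj, Module.finrank_fintype_fun_eq_card]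

end Matrix

theorem fromBlocks_transpose_mul_Jmat_mul_eq_zero {F : Type*} [Field F] {N : ℕ} {k l : Type*}
    [Fintype k] [Fintype l] {A : Matrix (Fin N) k F} {B : Matrix (Fin N) l F}
    (hAB : Aᵀ * B = 0) : (fromBlocks A 0 0 B)ᵀ * Jmat F N * fromBlocks A 0 0 B = 0 := by
  have hBA : Bᵀ * A = 0 := by
    rw [← transpose_transpose (Bᵀ * A), transpose_mul, transpose_transpose, hAB, transpose_zero]
  simp [Jmat, fromBlocks_transpose, fromBlocks_multiply, hAB, hBA]

section GRS

variable {F ι : Type*} [Field F] [Fintype ι]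

def grsGenerator (α w : ι → F) (k : ℕ) : Matrix ι (Fin k) F :=
  of fun i m => w i * α i ^ (m : ℕ)

/-- The weights `v` for which `GRS(α, v)` of dimension `N - k` is the dual of `GRS(α, u)` of
dimension `k`. -/
def grsDualWeight [DecidableEq ι] (α u : ι → F) (i : ι) : F :=
  (u i)⁻¹ * (∏ j ∈ univ.erase i, (α i - α j))⁻¹

variable {α : ι → F}

theorem grsDualWeight_ne_zero [DecidableEq ι] (hα : Function.Injective α) {u : ι → F}
    (hu : ∀ i, u i ≠ 0) (i : ι) : grsDualWeight α u i ≠ 0 := by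
  refine mul_ne_zero (inv_ne_zero (hu i)) (inv_ne_zero ?_)
  rw [prod_ne_zero_iff]
  intro j hj
  exact sub_ne_zero_of_ne fun h => (mem_erase.mp hj).1 (hα h).symm

theorem grsGenerator_transpose_mul_grsGenerator_dual [DecidableEq ι] (hα : Function.Injective α)
    {u : ι → F} (hu : ∀ i, u i ≠ 0) {k l : ℕ} (hkl : k + l ≤ Fintype.card ι) :
    (grsGenerator α u k)ᵀ * grsGenerator α (grsDualWeight α u) l = 0 := by
  ext m m'
  rw [mul_apply, Matrix.zero_apply,
    ← Lagrange.sum_pow_div_prod_sub_eq_zero univ hα.injOn (k := m + m') (by simp; omega)]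
  refine sum_congr rfl fun i _ => ?_
  simp only [grsGenerator, grsDualWeight, transpose_apply, of_apply]
  field_simp [hu i]
  ring

theorem grsGenerator_mulVec_eq_zero (hα : Function.Injective α) {w : ι → F}
    (hw : ∀ i, w i ≠ 0) {k : ℕ} (hk : k ≤ Fintype.card ι) (y : Fin k → F)
    (hy : grsGenerator α w k *ᵥ y = 0) : y = 0 := by
  obtain ⟨e⟩ : Nonempty (Fin k ↪ ι) :=
    Function.Embedding.nonempty_of_card_le (by rwa [Fintype.card_fin])
  refine eq_zero_of_forall_index_sum_pow_mul_eq_zero (f := α ∘ e) (hα.comp e.injective)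
    fun j => ?_
  have h := congrFun hy (e j)
  simp only [mulVec, dotProduct, grsGenerator, of_apply, Pi.zero_apply, mul_assoc,
    ← mul_sum] at h
  exact (mul_eq_zero.mp h).resolve_left (hw _)

end GRS

theorem grs_block_diag_sso_general {F : Type*} [Field F] {N : ℕ}
    (α u : Fin N → F) (hα : Function.Injective α) (hu : ∀ i, u i ≠ 0) :
    (Matrix.fromBlocks
        (Matrix.of fun (i : Fin N) (m : Fin ((N + 1) / 2)) => u i * α i ^ (m : ℕ)) 0 0
        (Matrix.of fun (i : Fin N) (m : Fin (N / 2)) =>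
          ((u i)⁻¹ * (∏ j ∈ Finset.univ.erase i, (α i - α j))⁻¹) * α i ^ (m : ℕ)))ᵀ *
        Jmat F N *
        Matrix.fromBlocks
          (Matrix.of fun (i : Fin N) (m : Fin ((N + 1) / 2)) => u i * α i ^ (m : ℕ)) 0 0
          (Matrix.of fun (i : Fin N) (m : Fin (N / 2)) =>
            ((u i)⁻¹ * (∏ j ∈ Finset.univ.erase i, (α i - α j))⁻¹) * α i ^ (m : ℕ)) = 0 ∧
      (Matrix.fromBlocks
          (Matrix.of fun (i : Fin N) (m : Fin ((N + 1) / 2)) => u i * α i ^ (m : ℕ)) 0 0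
          (Matrix.of fun (i : Fin N) (m : Fin (N / 2)) =>
            ((u i)⁻¹ * (∏ j ∈ Finset.univ.erase i, (α i - α j))⁻¹) * α i ^ (m : ℕ))).rank
        = N := by
  change (fromBlocks (grsGenerator α u ((N + 1) / 2)) 0 0
      (grsGenerator α (grsDualWeight α u) (N / 2)))ᵀ * Jmat F N * _ = 0 ∧
    (fromBlocks (grsGenerator α u ((N + 1) / 2)) 0 0
      (grsGenerator α (grsDualWeight α u) (N / 2))).rank = N
  have hcard : (N + 1) / 2 + N / 2 = Fintype.card (Fin N) := by simp; omega
  refine ⟨fromBlocks_transpose_mul_Jmat_mul_eq_zero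
    (grsGenerator_transpose_mul_grsGenerator_dual hα hu hcard.le), ?_⟩
  rw [rank_eq_card_of_mulVec_eq_zero (fromBlocks_mulVec_eq_zero
      (grsGenerator_mulVec_eq_zero hα hu (by omega))
      (grsGenerator_mulVec_eq_zero hα (grsDualWeight_ne_zero hα hu) (by omega)))]
  simpa using hcard

/-- The block-diagonal matrix `G = diag(G_u, G_v)` built from a GRS generator
matrix of dimension `⌈N/2⌉` and its dual-scaled GRS generator matrix of
dimension `⌊N/2⌋` is strongly self-orthogonal: `Gᵀ J G = 0` and `rank G = N`. -/
theorem grs_block_diag_sso {F : Type*} [Field F] {N : ℕ} (hN : 1 ≤ N)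
    (α u : Fin N → F) (hα : Function.Injective α) (hu : ∀ i, u i ≠ 0) :
    (Matrix.fromBlocks
        (Matrix.of fun (i : Fin N) (m : Fin ((N + 1) / 2)) => u i * α i ^ (m : ℕ)) 0 0
        (Matrix.of fun (i : Fin N) (m : Fin (N / 2)) =>
          ((u i)⁻¹ * (∏ j ∈ Finset.univ.erase i, (α i - α j))⁻¹) * α i ^ (m : ℕ)))ᵀ *
        Jmat F N *
        Matrix.fromBlocks
          (Matrix.of fun (i : Fin N) (m : Fin ((N + 1) / 2)) => u i * α i ^ (m : ℕ)) 0 0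
          (Matrix.of fun (i : Fin N) (m : Fin (N / 2)) =>
            ((u i)⁻¹ * (∏ j ∈ Finset.univ.erase i, (α i - α j))⁻¹) * α i ^ (m : ℕ)) = 0 ∧
      (Matrix.fromBlocks
          (Matrix.of fun (i : Fin N) (m : Fin ((N + 1) / 2)) => u i * α i ^ (m : ℕ)) 0 0
          (Matrix.of fun (i : Fin N) (m : Fin (N / 2)) =>
            ((u i)⁻¹ * (∏ j ∈ Finset.univ.erase i, (α i - α j))⁻¹) * α i ^ (m : ℕ))).rank
        = N :=
  grs_block_diag_sso_general α u hα hu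
end
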